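/- arXiv:1903.09360 — 6 statements merged into one kernel-verified Lean document; each statement's English description precedes it below -/
import Mathlib

section
/- If V' ⊆ V are F_q-subspaces of F_{q^s} with V = V' ⊕ F_q·a, and f'(x) = Π_{β∈V'}(x-β), then Π_{β∈V}(x-β) = (x^q - (f'(a))^{q-1} x) ∘ f', where ∘ denotes composition of polynomials. -/
/-!
Both sides are monic of degree `q · |V'| = |V|`, so it suffices that the right-hand side vanishes
on `V`. The subspace polynomial `f'` is invariant under translation by `V'`, and
`f'(c a) = c f'(a)` for `c ∈ F_q` because `c ^ |V'| = c`; hence `f'(b + c a) = c f'(a)` for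
`b ∈ V'`, and every `F_q`-multiple of `t = f'(a)` is a root of `X ^ q - t ^ (q - 1) X`.
-/

open Polynomial

theorem Polynomial.Monic.eq_prod_X_sub_C_of_injective {K ι : Type*} [Field K] [Fintype ι]
    {p : K[X]} (hp : p.Monic) {r : ι → K} (hr : Function.Injective r)
    (hdeg : p.natDegree ≤ Fintype.card ι) (hroot : ∀ i, p.IsRoot (r i)) :
    p = ∏ i, (X - C (r i)) :=
  eq_of_monic_of_dvd_of_natDegree_le (monic_prod_X_sub_C r _) hp
    (Fintype.prod_dvd_of_coprime (pairwise_coprime_X_sub_C hr) fun i => dvd_iff_isRoot.2 (hroot i))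
    (by simpa using hdeg)

theorem Submodule.natCard_sup_span_singleton {F M : Type*} [Field F] [AddCommGroup M]
    [Module F M] [Finite F] [Finite M] {W : Submodule F M} {a : M} (ha : a ∉ W) :
    Nat.card (W ⊔ span F {a} : Submodule F M) = Nat.card F * Nat.card W := by
  rw [Module.natCard_eq_pow_finrank (K := F), Module.natCard_eq_pow_finrank (K := F) (V := W),
    finrank_sup_span_singleton ha, pow_succ']

section SubspacePolynomial

variable {F K : Type*} [Field F] [Field K] [Algebra F K]

noncomputable def subspacePoly (W : Submodule F K) [Fintype W] : K[X] :=
  ∏ β : W, (X - C (β : K))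

variable (W : Submodule F K) [Fintype W]

theorem subspacePoly_monic : (subspacePoly W).Monic :=
  monic_prod_X_sub_C _ _

theorem natDegree_subspacePoly : (subspacePoly W).natDegree = Fintype.card W := by
  simp [subspacePoly]

theorem eval_subspacePoly (x : K) : (subspacePoly W).eval x = ∏ β : W, (x - β) := by
  simp [subspacePoly, eval_prod]

theorem eval_subspacePoly_of_mem {x : K} (hx : x ∈ W) : (subspacePoly W).eval x = 0 := by
  rw [eval_subspacePoly]
  exact Finset.prod_eq_zero (Finset.mem_univ ⟨x, hx⟩) (sub_self x)

theorem eval_add_subspacePoly (x : K) {b : K} (hb : b ∈ W) :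
    (subspacePoly W).eval (x + b) = (subspacePoly W).eval x := by
  simp only [eval_subspacePoly]
  exact (Fintype.prod_equiv (Equiv.addRight ⟨b, hb⟩) _ _ fun β => by simp).symm

theorem eval_smul_subspacePoly [Fintype F] (c : F) (x : K) :
    (subspacePoly W).eval (c • x) = c • (subspacePoly W).eval x := by
  rcases eq_or_ne c 0 with rfl | hc
  · simp [eval_subspacePoly_of_mem W W.zero_mem]
  have hcard : c ^ Fintype.card W = c := by
    rw [Module.card_eq_pow_finrank (K := F), FiniteField.pow_card_pow]
  simp only [eval_subspacePoly]
  calc ∏ β : W, (c • x - β) = ∏ β : W, (c • x - (c • β : W)) :=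
        (Fintype.prod_equiv (LinearEquiv.smulOfNeZero F W c hc) (fun β : W => c • x - (c • β : W))
          (fun β : W => c • x - β) fun _ => rfl).symm
    _ = c ^ Fintype.card W • ∏ β : W, (x - β) := by
        simp [← smul_sub, Finset.prod_smul]
    _ = c • ∏ β : W, (x - β) := by rw [hcard]

end SubspacePolynomial

section LinearizedBinomial

variable {K : Type*} [Field K] {n : ℕ}

theorem monic_X_pow_sub_C_mul_X (hn : 1 < n) (u : K) : (X ^ n - C u * X).Monic :=
  monic_X_pow_sub <| (degree_C_mul_X_le u).trans_lt (by exact_mod_cast hn)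

theorem natDegree_X_pow_sub_C_mul_X (hn : 1 < n) (u : K) : (X ^ n - C u * X).natDegree = n := by
  rw [natDegree_sub_eq_left_of_natDegree_lt] <;> rw [natDegree_X_pow]
  exact (natDegree_C_mul_le u X).trans_lt (natDegree_X_le.trans_lt hn)

theorem isRoot_X_pow_card_sub_C_mul_X {F : Type*} [Field F] [Fintype F] [Algebra F K]
    (t : K) (c : F) :
    (X ^ Fintype.card F - C (t ^ (Fintype.card F - 1)) * X).IsRoot (c • t) := by
  simp only [IsRoot, eval_sub, eval_mul, eval_pow, eval_X, eval_C, _root_.smul_pow,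
    FiniteField.pow_card, mul_smul_comm, ← pow_succ, Nat.sub_add_cancel Fintype.card_pos,
    sub_self]

end LinearizedBinomial

/-- If `V' ⊆ V` are `F_q`-subspaces of `F_{q^s}` with `V = V' ⊕ F_q·a` (where
`a ∉ V'`), and `f' = ∏_{β ∈ V'} (x - β)`, then
`∏_{β ∈ V} (x - β) = (x^q - (f'(a))^{q-1} x) ∘ f'`. -/
theorem subspace_prod_step
    (Fq K : Type*) [Field Fq] [Fintype Fq] [Field K] [Fintype K] [Algebra Fq K]
    (q : ℕ) (hq : Fintype.card Fq = q)
    (V' V : Submodule Fq K) [Fintype V'] [Fintype V]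
    (a : K) (ha : a ∉ V') (hV : V = V' ⊔ Submodule.span Fq {a}) :
    ∏ β : V, (X - C (β : K)) =
      (X ^ q - C (((∏ β : V', (X - C (β : K))).eval a) ^ (q - 1)) * X).comp
        (∏ β : V', (X - C (β : K))) := by
  subst hq hV
  have hq : 1 < Fintype.card Fq := Fintype.one_lt_card
  change subspacePoly _ = (X ^ _ - C ((subspacePoly V').eval a ^ _) * X).comp (subspacePoly V')
  have hcard : Fintype.card (V' ⊔ Submodule.span Fq {a} : Submodule Fq K) =
      Fintype.card Fq * Fintype.card V' := by
    simpa only [Nat.card_eq_fintype_card] using Submodule.natCard_sup_span_singleton ha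
  refine ((monic_X_pow_sub_C_mul_X hq _).comp (subspacePoly_monic V') ?_
    |>.eq_prod_X_sub_C_of_injective Subtype.val_injective ?_ ?_).symm
  · rw [natDegree_subspacePoly]
    exact Fintype.card_ne_zero
  · rw [natDegree_comp, natDegree_X_pow_sub_C_mul_X hq, natDegree_subspacePoly, hcard]
  · rintro ⟨v, hv⟩
    change IsRoot _ v
    obtain ⟨b, hb, _, hc, rfl⟩ := Submodule.mem_sup.1 hv
    obtain ⟨c, rfl⟩ := Submodule.mem_span_singleton.1 hc
    rw [IsRoot, eval_comp, add_comm, eval_add_subspacePoly V' _ hb, eval_smul_subspacePoly]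
    exact isRoot_X_pow_card_sub_C_mul_X _ c
end

section
/- Let f, g be q-linearized polynomials over a field of characteristic p, with q a power of p. If x^q does not divide f and x^{q^t} divides g ∘ f, then x^{q^t} divides g. -/
/- A `q`-linearized `f` with `x^q ∤ f` has the form `f = x h` with `h(0) ≠ 0`.
Composition with such an `f` preserves the `x`-adic order: inductively, if `g = x^n k` then
`g ∘ f = x^n h^n (k ∘ f)`, and since `x` is prime and `x ∤ h`, `x ∣ h^n (k ∘ f)` forces
`x ∣ k ∘ f`, i.e. `k(0) = k(f(0)) = 0`. -/

open Polynomial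

/-- A polynomial is `q`-linearized if every monomial appearing in it has
exponent a power of `q`. -/
def IsLinearized (q : ℕ) {R : Type*} [Semiring R] (f : Polynomial R) : Prop :=
  ∀ i, f.coeff i ≠ 0 → ∃ j, i = q ^ j

theorem Polynomial.X_dvd_comp_iff {R : Type*} [CommSemiring R] {f : R[X]} (hf : X ∣ f)
    {g : R[X]} : X ∣ g.comp f ↔ X ∣ g := by
  simp only [X_dvd_iff, coeff_zero_eq_eval_zero, eval_comp, ← coeff_zero_eq_eval_zero f,
    X_dvd_iff.mp hf]

theorem Polynomial.X_pow_dvd_of_dvd_comp_X_mul {R : Type*} [CommRing R] [IsDomain R]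
    {h : R[X]} (hh : ¬ X ∣ h) {g : R[X]} {n : ℕ} (hdvd : X ^ n ∣ g.comp (X * h)) :
    X ^ n ∣ g := by
  induction n with
  | zero => exact one_dvd g
  | succ n ih =>
    obtain ⟨k, rfl⟩ := ih ((pow_dvd_pow X n.le_succ).trans hdvd)
    have hk : X ∣ h ^ n * k.comp (X * h) := by
      rw [mul_comp, X_pow_comp, mul_pow, mul_assoc, pow_succ] at hdvd
      exact (mul_dvd_mul_iff_left (pow_ne_zero n X_ne_zero)).mp hdvd
    have hXk : X ∣ k.comp (X * h) :=
      (prime_X.dvd_or_dvd hk).resolve_left fun hX => hh (prime_X.dvd_of_dvd_pow hX)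
    rw [pow_succ]
    exact mul_dvd_mul_left _ ((X_dvd_comp_iff (dvd_mul_right X h)).mp hXk)

section Linearized

variable {R : Type*} [Semiring R] {q : ℕ} {f : R[X]}

theorem IsLinearized.coeff_zero (hf : IsLinearized q f) (hq : q ≠ 0) : f.coeff 0 = 0 := by
  by_contra h0
  obtain ⟨j, hj⟩ := hf 0 h0
  exact pow_ne_zero j hq hj.symm

theorem IsLinearized.coeff_one_ne_zero (hf : IsLinearized q f) (hxf : ¬ X ^ q ∣ f) :
    f.coeff 1 ≠ 0 := by
  obtain ⟨d, hdq, hd⟩ : ∃ d < q, f.coeff d ≠ 0 := by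
    simpa only [X_pow_dvd_iff, not_forall, exists_prop] using hxf
  obtain ⟨j, rfl⟩ := hf d hd
  obtain rfl : j = 0 := by
    by_contra hj
    exact (Nat.le_self_pow hj q).not_gt hdq
  simpa using hd

end Linearized

theorem x_pow_dvd_of_dvd_comp_general
    (K : Type*) [Field K]
    (q t : ℕ)
    (f g : Polynomial K) (hf : IsLinearized q f)
    (hxf : ¬ X ^ q ∣ f) (hdvd : X ^ q ^ t ∣ g.comp f) :
    X ^ q ^ t ∣ g := by
  have hq : q ≠ 0 := by
    rintro rfl
    exact hxf (by simp)
  obtain ⟨h, rfl⟩ := X_dvd_iff.mpr (hf.coeff_zero hq)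
  have hh : ¬ X ∣ h := by
    rw [X_dvd_iff, ← coeff_X_mul]
    exact hf.coeff_one_ne_zero hxf
  exact X_pow_dvd_of_dvd_comp_X_mul hh hdvd

/-- For `q`-linearized polynomials `f, g` over a field of characteristic `p`,
with `q` a power of `p`: if `x^q ∤ f` and `x^{q^t} ∣ g ∘ f`, then `x^{q^t} ∣ g`. -/
theorem x_pow_dvd_of_dvd_comp
    (K : Type*) [Field K] (p : ℕ) [Fact p.Prime] [CharP K p]
    (q e t : ℕ) (he : 1 ≤ e) (hq : q = p ^ e)
    (f g : Polynomial K) (hf : IsLinearized q f) (hg : IsLinearized q g)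
    (hxf : ¬ X ^ q ∣ f) (hdvd : X ^ q ^ t ∣ g.comp f) :
    X ^ q ^ t ∣ g :=
  x_pow_dvd_of_dvd_comp_general K q t f g hf hxf hdvd
end

section
/- Let x_1, ..., x_n be indeterminates over F_{q^s}, and for Z ⊆ {1,...,n} and t ≥ 0 define f(Z,t)(x) = Π_{β ∈ span_{F_q}{x_i : i∈Z}} (x - β)^{q^t}, a polynomial in x with coefficients in F_{q^s}[x_1,...,x_n]. Then for any Z_1, Z_2 ⊆ [n] and t_1, t_2 ≥ 0, gcd(f(Z_1,t_1), f(Z_2,t_2)) = f(Z_1 ∩ Z_2, min(t_1,t_2)) (up to units), in the polynomial ring over the fraction field. -/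
open scoped Classical
open Polynomial

/-- The `F_q`-span of `{v i : i ∈ Z}`, as a finite set. -/
noncomputable def spanFinset (Fq : Type*) [Field Fq] [Fintype Fq]
    {R : Type*} [CommRing R] [Algebra Fq R] {n : ℕ}
    (v : Fin n → R) (Z : Finset (Fin n)) : Finset R :=
  Finset.image (fun γ : Fin n → Fq => ∑ i ∈ Z, γ i • v i) Finset.univ

/-- `f(Z,t)(x) = ∏_{β ∈ span_{F_q}{v i : i ∈ Z}} (x - β)^{q^t}`. -/
noncomputable def fLin (Fq : Type*) [Field Fq] [Fintype Fq]
    {R : Type*} [CommRing R] [Algebra Fq R] {n : ℕ} (q : ℕ)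
    (v : Fin n → R) (Z : Finset (Fin n)) (t : ℕ) : Polynomial R :=
  ∏ β ∈ spanFinset Fq v Z, (X - C β) ^ q ^ t

section Aux

variable {L : Type*} [Field L]

lemma aux_isCoprime_prods {S₁ S₂ : Finset L} (h : Disjoint S₁ S₂) (m₁ m₂ : ℕ) :
    IsCoprime (∏ a ∈ S₁, (X - C a) ^ m₁) (∏ a ∈ S₂, (X - C a) ^ m₂) := by
  apply IsCoprime.prod_left
  intro a ha
  apply IsCoprime.prod_right
  intro b hb
  have hab : a ≠ b := fun hab => (Finset.disjoint_left.mp h) ha (hab ▸ hb)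
  exact (Polynomial.isCoprime_X_sub_C_of_isUnit_sub
    ((sub_ne_zero.mpr hab).isUnit)).pow

lemma aux_gcd_prods_le (S₁ S₂ : Finset L) {m₁ m₂ : ℕ} (h : m₁ ≤ m₂) :
    Associated
      (EuclideanDomain.gcd (∏ a ∈ S₁, (X - C a) ^ m₁) (∏ a ∈ S₂, (X - C a) ^ m₂))
      (∏ a ∈ S₁ ∩ S₂, (X - C a) ^ m₁) := by
  set g : Polynomial L := ∏ a ∈ S₁ ∩ S₂, (X - C a) ^ m₁ with hg
  set r₁ : Polynomial L := ∏ a ∈ S₁ \ S₂, (X - C a) ^ m₁ with hr₁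
  set r₂ : Polynomial L :=
    (∏ a ∈ S₁ ∩ S₂, (X - C a) ^ (m₂ - m₁)) * ∏ a ∈ S₂ \ S₁, (X - C a) ^ m₂ with hr₂
  have hdisj1 : Disjoint (S₁ ∩ S₂) (S₁ \ S₂) := by
    rw [Finset.disjoint_left]
    intro a ha hb
    exact (Finset.mem_sdiff.mp hb).2 (Finset.mem_inter.mp ha).2
  have hdisj2 : Disjoint (S₂ ∩ S₁) (S₂ \ S₁) := by
    rw [Finset.disjoint_left]
    intro a ha hb
    exact (Finset.mem_sdiff.mp hb).2 (Finset.mem_inter.mp ha).2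
  have hcup1 : S₁ ∩ S₂ ∪ S₁ \ S₂ = S₁ := by
    ext a; simp only [Finset.mem_union, Finset.mem_inter, Finset.mem_sdiff]; tauto
  have hcup2 : S₂ ∩ S₁ ∪ S₂ \ S₁ = S₂ := by
    ext a; simp only [Finset.mem_union, Finset.mem_inter, Finset.mem_sdiff]; tauto
  have hp₁ : (∏ a ∈ S₁, (X - C a) ^ m₁) = g * r₁ := by
    rw [hg, hr₁, ← Finset.prod_union hdisj1, hcup1]
  have hp₂ : (∏ a ∈ S₂, (X - C a) ^ m₂) = g * r₂ := by
    rw [hg, hr₂, ← mul_assoc, ← Finset.prod_mul_distrib]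
    have : ∀ a ∈ S₁ ∩ S₂, (X - C a) ^ m₁ * (X - C a) ^ (m₂ - m₁) = (X - C a) ^ m₂ := by
      intro a _
      rw [← pow_add]
      congr 1
      omega
    rw [Finset.prod_congr rfl this, Finset.inter_comm,
      ← Finset.prod_union hdisj2, hcup2]
  have hco : IsCoprime r₁ r₂ := by
    rw [hr₁, hr₂]
    refine IsCoprime.mul_right ?_ ?_
    · exact aux_isCoprime_prods
        (by
          rw [Finset.disjoint_left]
          intro a ha hb
          exact (Finset.mem_sdiff.mp ha).2 (Finset.mem_inter.mp hb).2) _ _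
    · exact aux_isCoprime_prods
        (by
          rw [Finset.disjoint_left]
          intro a ha hb
          exact (Finset.mem_sdiff.mp hb).2 (Finset.mem_sdiff.mp ha).1) _ _
  rw [hp₁, hp₂]
  apply associated_of_dvd_dvd
  · obtain ⟨u, v, huv⟩ := hco
    have hgeq : g = u * (g * r₁) + v * (g * r₂) := by
      linear_combination (-g) * huv
    calc EuclideanDomain.gcd (g * r₁) (g * r₂) ∣ u * (g * r₁) + v * (g * r₂) :=
        dvd_add ((EuclideanDomain.gcd_dvd_left _ _).mul_left u)
          ((EuclideanDomain.gcd_dvd_right _ _).mul_left v)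
      _ = g := hgeq.symm
  · exact EuclideanDomain.dvd_gcd (dvd_mul_right g r₁) (dvd_mul_right g r₂)

lemma aux_gcd_comm (p₁ p₂ : Polynomial L) :
    Associated (EuclideanDomain.gcd p₁ p₂) (EuclideanDomain.gcd p₂ p₁) :=
  associated_of_dvd_dvd
    (EuclideanDomain.dvd_gcd (EuclideanDomain.gcd_dvd_right _ _)
      (EuclideanDomain.gcd_dvd_left _ _))
    (EuclideanDomain.dvd_gcd (EuclideanDomain.gcd_dvd_right _ _)
      (EuclideanDomain.gcd_dvd_left _ _))

lemma aux_gcd_prods (S₁ S₂ : Finset L) (m₁ m₂ : ℕ) :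
    Associated
      (EuclideanDomain.gcd (∏ a ∈ S₁, (X - C a) ^ m₁) (∏ a ∈ S₂, (X - C a) ^ m₂))
      (∏ a ∈ S₁ ∩ S₂, (X - C a) ^ min m₁ m₂) := by
  rcases le_total m₁ m₂ with h | h
  · rw [min_eq_left h]
    exact aux_gcd_prods_le S₁ S₂ h
  · rw [min_eq_right h]
    refine (aux_gcd_comm _ _).trans ?_
    rw [Finset.inter_comm]
    exact aux_gcd_prods_le S₂ S₁ h

end Aux

section SpanInter

variable (Fq K : Type*) [Field Fq] [Fintype Fq] [Field K] [Algebra Fq K] {n : ℕ}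

lemma aux_coeff_sum (Z : Finset (Fin n)) (γ : Fin n → Fq) (j : Fin n) :
    MvPolynomial.coeff (Finsupp.single j 1)
      (∑ i ∈ Z, γ i • MvPolynomial.X (R := K) i)
      = if j ∈ Z then algebraMap Fq K (γ j) else 0 := by
  rw [MvPolynomial.coeff_sum]
  have h : ∀ i ∈ Z, MvPolynomial.coeff (Finsupp.single j 1)
      (γ i • MvPolynomial.X (R := K) i)
      = if i = j then algebraMap Fq K (γ i) else 0 := by
    intro i _
    rw [MvPolynomial.coeff_smul, MvPolynomial.coeff_X']
    by_cases hij : i = j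
    · simp [hij, Algebra.smul_def]
    · have : Finsupp.single i (1 : ℕ) ≠ Finsupp.single j 1 := by
        intro hcon
        exact hij ((Finsupp.single_left_inj one_ne_zero).mp hcon)
      simp [this, hij]
  rw [Finset.sum_congr rfl h, Finset.sum_ite_eq' Z j (fun i => algebraMap Fq K (γ i))]

lemma aux_span_inter (Z₁ Z₂ : Finset (Fin n)) :
    spanFinset Fq (MvPolynomial.X (R := K)) Z₁ ∩
      spanFinset Fq (MvPolynomial.X (R := K)) Z₂
      = spanFinset Fq (MvPolynomial.X (R := K)) (Z₁ ∩ Z₂) := by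
  have halg : Function.Injective (algebraMap Fq K) := (algebraMap Fq K).injective
  ext β
  simp only [Finset.mem_inter, spanFinset, Finset.mem_image, Finset.mem_univ, true_and]
  constructor
  · rintro ⟨⟨γ, hγ⟩, ⟨δ, hδ⟩⟩
    refine ⟨γ, ?_⟩
    have hcoeff : ∀ j : Fin n,
        (if j ∈ Z₁ then algebraMap Fq K (γ j) else 0)
          = (if j ∈ Z₂ then algebraMap Fq K (δ j) else 0) := by
      intro j
      rw [← aux_coeff_sum Fq K Z₁ γ j, ← aux_coeff_sum Fq K Z₂ δ j, hγ, hδ]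
    rw [← hγ]
    apply Finset.sum_subset Finset.inter_subset_left
    intro i hi₁ hi₂
    have hi₂' : i ∉ Z₂ := fun h => hi₂ (Finset.mem_inter.mpr ⟨hi₁, h⟩)
    have := hcoeff i
    rw [if_pos hi₁, if_neg hi₂'] at this
    have hz : γ i = 0 := halg (by rw [this, map_zero])
    rw [hz, zero_smul]
  · rintro ⟨γ, hγ⟩
    constructor
    · refine ⟨fun i => if i ∈ Z₂ then γ i else 0, ?_⟩
      rw [← hγ]
      have h1 : ∀ x ∈ Z₁, x ∉ Z₁ ∩ Z₂ →
          (if x ∈ Z₂ then γ x else 0) • MvPolynomial.X (R := K) x = 0 := by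
        intro i hi₁ hi₂
        rw [if_neg (fun h => hi₂ (Finset.mem_inter.mpr ⟨hi₁, h⟩)), zero_smul]
      rw [← Finset.sum_subset Finset.inter_subset_left h1]
      exact Finset.sum_congr rfl (fun i hi => by rw [if_pos (Finset.mem_inter.mp hi).2])
    · refine ⟨fun i => if i ∈ Z₁ then γ i else 0, ?_⟩
      rw [← hγ]
      have h1 : ∀ x ∈ Z₂, x ∉ Z₁ ∩ Z₂ →
          (if x ∈ Z₁ then γ x else 0) • MvPolynomial.X (R := K) x = 0 := by
        intro i hi₂ hi₁
        rw [if_neg (fun h => hi₁ (Finset.mem_inter.mpr ⟨h, hi₂⟩)), zero_smul]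
      rw [← Finset.sum_subset Finset.inter_subset_right h1]
      exact Finset.sum_congr rfl (fun i hi => by rw [if_pos (Finset.mem_inter.mp hi).1])

end SpanInter

lemma aux_map_fLin {Fq : Type*} [Field Fq] [Fintype Fq]
    {R S : Type*} [CommRing R] [CommRing S] [Algebra Fq R] {n : ℕ} (q : ℕ)
    (v : Fin n → R) (Z : Finset (Fin n)) (t : ℕ) (φ : R →+* S)
    (hφ : Function.Injective φ) :
    (fLin Fq q v Z t).map φ
      = ∏ a ∈ (spanFinset Fq v Z).image φ, (X - C a) ^ q ^ t := by
  rw [fLin, Polynomial.map_prod,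
    Finset.prod_image (fun a _ b _ h => hφ h)]
  apply Finset.prod_congr rfl
  intro β _
  rw [Polynomial.map_pow, Polynomial.map_sub, Polynomial.map_X, Polynomial.map_C]

/-- Over the fraction field of `F_{q^s}[x_1,…,x_n]`, the gcd of
`f(Z₁,t₁)` and `f(Z₂,t₂)` is (up to units) `f(Z₁ ∩ Z₂, min t₁ t₂)`. -/
theorem gcd_fLin
    (Fq K : Type*) [Field Fq] [Fintype Fq] [Field K] [Algebra Fq K]
    (q : ℕ) (hq : Fintype.card Fq = q) (n : ℕ)
    (Z₁ Z₂ : Finset (Fin n)) (t₁ t₂ : ℕ) :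
    Associated
      (EuclideanDomain.gcd
        ((fLin Fq q (MvPolynomial.X (R := K)) Z₁ t₁).map
          (algebraMap (MvPolynomial (Fin n) K) (FractionRing (MvPolynomial (Fin n) K))))
        ((fLin Fq q (MvPolynomial.X (R := K)) Z₂ t₂).map
          (algebraMap (MvPolynomial (Fin n) K) (FractionRing (MvPolynomial (Fin n) K)))))
      ((fLin Fq q (MvPolynomial.X (R := K)) (Z₁ ∩ Z₂) (min t₁ t₂)).map
        (algebraMap (MvPolynomial (Fin n) K) (FractionRing (MvPolynomial (Fin n) K)))) := by
  set R := MvPolynomial (Fin n) K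
  set L := FractionRing R
  have hφ : Function.Injective (algebraMap R L) := IsFractionRing.injective R L
  have hq1 : 1 ≤ q := hq ▸ Fintype.card_pos
  have hmin : q ^ min t₁ t₂ = min (q ^ t₁) (q ^ t₂) := by
    rcases le_total t₁ t₂ with h | h
    · rw [min_eq_left h, min_eq_left (Nat.pow_le_pow_right hq1 h)]
    · rw [min_eq_right h, min_eq_right (Nat.pow_le_pow_right hq1 h)]
  rw [aux_map_fLin q _ Z₁ t₁ _ hφ, aux_map_fLin q _ Z₂ t₂ _ hφ,
    aux_map_fLin q _ (Z₁ ∩ Z₂) (min t₁ t₂) _ hφ,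
    ← aux_span_inter Fq K Z₁ Z₂, @Finset.image_inter _ _ (fun a b => Classical.propDecidable _) _ _ _ _ hφ, hmin]
  convert aux_gcd_prods _ _ _ _
end

section
/- Substituting x_n = 0 in the coefficients of f(Z,t) yields: if n ∉ Z, the result is f(Z,t) (in n-1 variables); if n ∈ Z, the result is f(Z∖{n}, t+1). -/
open scoped Classical
open Polynomial

/-- The substitution `x_n ↦ 0` (keeping the other variables), as a ring hom
`F_{q^s}[x_1,…,x_{n+1}] → F_{q^s}[x_1,…,x_n]`. -/
noncomputable def subLast (K : Type*) [CommSemiring K] (n : ℕ) :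
    MvPolynomial (Fin (n + 1)) K →+* MvPolynomial (Fin n) K :=
  (MvPolynomial.aeval (R := K) fun i : Fin (n + 1) =>
      if h : (i : ℕ) < n then MvPolynomial.X ⟨i, h⟩ else 0).toRingHom

/-!
Every element of the `F_q`-span of `{x_i : i ∈ Z}` can be written uniquely as `σ + c • x_n` with
`σ` in the span of `{x_i : i ∈ Z, i < n}` and `c ∈ F_q`, where `c = 0` unless `n ∈ Z`; the
substitution `x_n ↦ 0` sends it to `σ`. Hence every factor of `f(Z ∖ {n}, t)` appears `q` times
in the substituted product if `n ∈ Z` and once otherwise, and `f(W, t) ^ q = f(W, t + 1)`.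
-/

theorem Fin.sum_finset_eq_sum_castSucc_add {M : Type*} [AddCommMonoid M] {n : ℕ}
    (Z : Finset (Fin (n + 1))) (f : Fin (n + 1) → M) :
    ∑ i ∈ Z, f i = ∑ i ∈ Finset.univ.filter (fun i : Fin n => i.castSucc ∈ Z), f i.castSucc +
      if Fin.last n ∈ Z then f (Fin.last n) else 0 := by
  rw [← Finset.univ_inter Z, ← Finset.sum_ite_mem, Fin.sum_univ_castSucc, Finset.sum_filter]
  simp only [Finset.univ_inter]

section fLin

variable {Fq : Type*} [Field Fq] [Fintype Fq] {R : Type*} [CommRing R] [Algebra Fq R]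
  {n : ℕ} (q : ℕ) (v : Fin n → R) (Z : Finset (Fin n)) (t : ℕ)

theorem mem_spanFinset {β : R} :
    β ∈ spanFinset Fq v Z ↔ ∃ γ : Fin n → Fq, ∑ i ∈ Z, γ i • v i = β := by
  simp [spanFinset]

theorem fLin_succ : fLin Fq q v Z (t + 1) = fLin Fq q v Z t ^ q := by
  simp only [fLin, pow_succ, pow_mul, Finset.prod_pow]

theorem fLin_map {S : Type*} [CommRing S] (f : R →+* S) :
    (fLin Fq q v Z t).map f = ∏ β ∈ spanFinset Fq v Z, (X - C (f β)) ^ q ^ t := by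
  simp [fLin, Polynomial.map_prod]

end fLin

section subLast

open MvPolynomial

variable (Fq K : Type*) [Field Fq] [CommRing K] [Algebra Fq K] {n : ℕ}

theorem subLast_rename_castSucc (p : MvPolynomial (Fin n) K) :
    subLast K n (rename Fin.castSucc p) = p := by
  have hcomp : (fun i : Fin (n + 1) => if h : (i : ℕ) < n then X ⟨i, h⟩ else 0) ∘ Fin.castSucc =
      (X : Fin n → MvPolynomial (Fin n) K) := by
    funext i
    simp
  simp only [subLast, AlgHom.toRingHom_eq_coe, RingHom.coe_coe, aeval_rename, hcomp,
    MvPolynomial.aeval_X_left_apply]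

theorem subLast_smul_X_last (c : Fq) :
    subLast K n (c • X (Fin.last n)) = 0 := by
  simp [subLast, AlgHom.map_smul_of_tower]

noncomputable def addSmulXLast (p : MvPolynomial (Fin n) K × Fq) : MvPolynomial (Fin (n + 1)) K :=
  rename Fin.castSucc p.1 + p.2 • X (Fin.last n)

theorem subLast_addSmulXLast (p : MvPolynomial (Fin n) K × Fq) :
    subLast K n (addSmulXLast Fq K p) = p.1 := by
  rw [addSmulXLast, map_add, subLast_rename_castSucc, subLast_smul_X_last, add_zero]

theorem addSmulXLast_injective [Nontrivial K] :
    Function.Injective (addSmulXLast Fq K (n := n)) := by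
  rintro ⟨p₁, c₁⟩ ⟨p₂, c₂⟩ h
  have hp : p₁ = p₂ := by
    simpa only [subLast_addSmulXLast] using congrArg (subLast K n) h
  subst hp
  simp only [addSmulXLast, add_right_inj] at h
  rw [smul_left_injective Fq (X_ne_zero _) h]

variable [Fintype Fq]

theorem spanFinset_X_eq_image_addSmulXLast (Z : Finset (Fin (n + 1))) :
    spanFinset Fq (X (R := K)) Z =
      (spanFinset Fq (X (R := K)) (Finset.univ.filter fun i : Fin n => i.castSucc ∈ Z) ×ˢ
        (if Fin.last n ∈ Z then Finset.univ else {0})).image (addSmulXLast Fq K) := by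
  ext β
  simp only [Finset.mem_image, Finset.mem_product, mem_spanFinset, Prod.exists, addSmulXLast]
  constructor
  · rintro ⟨γ, rfl⟩
    refine ⟨_, if Fin.last n ∈ Z then γ (Fin.last n) else 0, ⟨⟨fun i => γ i.castSucc, rfl⟩, ?_⟩,
      ?_⟩
    · split_ifs <;> simp
    · rw [Fin.sum_finset_eq_sum_castSucc_add]
      split_ifs <;> simp [AlgHom.map_smul_of_tower]
  · rintro ⟨_, c, ⟨⟨γ, rfl⟩, hc⟩, rfl⟩
    refine ⟨Fin.snoc γ c, ?_⟩
    rw [Fin.sum_finset_eq_sum_castSucc_add]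
    split_ifs at hc ⊢
    · simp [AlgHom.map_smul_of_tower]
    · simp [Finset.mem_singleton.mp hc, AlgHom.map_smul_of_tower]

end subLast

/-- Substituting `x_n = 0` in the coefficients of `f(Z,t)` gives `f(Z,t)` if
`n ∉ Z`, and `f(Z \ {n}, t+1)` if `n ∈ Z` (in one fewer variable). -/
theorem fLin_subst_last
    (Fq K : Type*) [Field Fq] [Fintype Fq] [Field K] [Algebra Fq K]
    (q : ℕ) (hq : Fintype.card Fq = q) (n : ℕ)
    (Z : Finset (Fin (n + 1))) (t : ℕ) :
    (fLin Fq q (MvPolynomial.X (R := K)) Z t).map (subLast K n) =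
      if Fin.last n ∈ Z then
        fLin Fq q (MvPolynomial.X (R := K))
          (Finset.univ.filter fun i : Fin n => i.castSucc ∈ Z) (t + 1)
      else
        fLin Fq q (MvPolynomial.X (R := K))
          (Finset.univ.filter fun i : Fin n => i.castSucc ∈ Z) t := by
  rw [fLin_map, spanFinset_X_eq_image_addSmulXLast,
    Finset.prod_image (addSmulXLast_injective Fq K).injOn]
  simp only [subLast_addSmulXLast, Finset.prod_product, Finset.prod_const]
  split_ifs
  · rw [Finset.card_univ, hq, Finset.prod_pow, fLin_succ, fLin]
  · simp only [Finset.card_singleton, pow_one, fLin]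
end

section
/- (Generalized Hall's theorem) Let G = (U, V, E) be a finite bipartite graph and suppose there exist an integer c ≥ 0 and integers d_i ≥ 1 for i ∈ U such that for every nonempty Ω ⊆ U, |N_G(Ω)| ≥ c + Σ_{i∈Ω} d_i, where N_G(Ω) is the neighborhood of Ω in V. Then there is a subgraph G' of G (obtained by removing edges) in which every vertex i ∈ U has degree exactly c + d_i, and which still satisfies |N_{G'}(Ω)| ≥ c + Σ_{i∈Ω} d_i for all nonempty Ω ⊆ U. -/
open Finset

section Aux
variable {U V : Type*} [DecidableEq U] [DecidableEq V]

/-- Neighborhood of `Ω` in the edge set `F`. -/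
private def Nb (F : Finset (U × V)) (Ω : Finset U) : Finset V :=
  (F.filter fun e => e.1 ∈ Ω).image Prod.snd

private lemma mem_Nb {F : Finset (U × V)} {Ω : Finset U} {j : V} :
    j ∈ Nb F Ω ↔ ∃ a ∈ Ω, (a, j) ∈ F := by
  simp only [Nb, mem_image, mem_filter]
  constructor
  · rintro ⟨⟨a, b⟩, ⟨hF, hΩ⟩, rfl⟩; exact ⟨a, hΩ, hF⟩
  · rintro ⟨a, hΩ, hF⟩; exact ⟨(a, j), ⟨hF, hΩ⟩, rfl⟩

private lemma Nb_union (F : Finset (U × V)) (A B : Finset U) :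
    Nb F (A ∪ B) = Nb F A ∪ Nb F B := by
  ext j; simp only [mem_Nb, mem_union]
  constructor
  · rintro ⟨a, ha | ha, hF⟩
    · exact Or.inl ⟨a, ha, hF⟩
    · exact Or.inr ⟨a, ha, hF⟩
  · rintro (⟨a, ha, hF⟩ | ⟨a, ha, hF⟩)
    · exact ⟨a, Or.inl ha, hF⟩
    · exact ⟨a, Or.inr ha, hF⟩

private lemma Nb_inter_subset (F : Finset (U × V)) (A B : Finset U) :
    Nb F (A ∩ B) ⊆ Nb F A ∩ Nb F B := by
  intro j hj
  rw [mem_Nb] at hj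
  obtain ⟨a, ha, hF⟩ := hj
  rw [mem_inter] at ha
  exact mem_inter.2 ⟨mem_Nb.2 ⟨a, ha.1, hF⟩, mem_Nb.2 ⟨a, ha.2, hF⟩⟩

private lemma Nb_submod (F : Finset (U × V)) (A B : Finset U) :
    (Nb F (A ∪ B)).card + (Nb F (A ∩ B)).card ≤ (Nb F A).card + (Nb F B).card := by
  rw [Nb_union]
  calc (Nb F A ∪ Nb F B).card + (Nb F (A ∩ B)).card
      ≤ (Nb F A ∪ Nb F B).card + (Nb F A ∩ Nb F B).card := by
        exact Nat.add_le_add_left (card_le_card (Nb_inter_subset F A B)) _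
    _ = (Nb F A).card + (Nb F B).card := card_union_add_card_inter _ _

end Aux

/-- Generalized Hall's theorem: if a finite bipartite graph `E ⊆ U × V` satisfies
`|N(Ω)| ≥ c + ∑_{i∈Ω} d_i` for every nonempty `Ω ⊆ U` (with `c ≥ 0`, `d_i ≥ 1`),
then edges can be removed to obtain `E' ⊆ E` in which every `i ∈ U` has degree
exactly `c + d_i`, while all the neighborhood inequalities are preserved. -/
theorem generalized_halls_theorem
    (U V : Type*) [Fintype U] [Fintype V] [DecidableEq U] [DecidableEq V]
    (E : Finset (U × V)) (c : ℕ) (d : U → ℕ) (hd : ∀ i, 1 ≤ d i)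
    (hN : ∀ Ω : Finset U, Ω.Nonempty →
      c + ∑ i ∈ Ω, d i ≤ ((E.filter fun e => e.1 ∈ Ω).image Prod.snd).card) :
    ∃ E' ⊆ E,
      (∀ i : U, (E'.filter fun e => e.1 = i).card = c + d i) ∧
      ∀ Ω : Finset U, Ω.Nonempty →
        c + ∑ i ∈ Ω, d i ≤ ((E'.filter fun e => e.1 ∈ Ω).image Prod.snd).card := by
  classical
  set P : Finset (U × V) → Prop := fun F => ∀ Ω : Finset U, Ω.Nonempty →
      c + ∑ i ∈ Ω, d i ≤ (Nb F Ω).card with hPdef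
  -- pick a minimal (in cardinality) subset of E satisfying P
  obtain ⟨F, hFmem, hFmin⟩ :=
    (E.powerset.filter P).exists_min_image card
      ⟨E, mem_filter.2 ⟨mem_powerset_self E, fun Ω hΩ => hN Ω hΩ⟩⟩
  rw [mem_filter, mem_powerset] at hFmem
  obtain ⟨hFE, hPF⟩ := hFmem
  refine ⟨F, hFE, ?_, fun Ω hΩ => hPF Ω hΩ⟩
  -- minimality: removing any edge breaks P
  have hmin : ∀ e ∈ F, ¬ P (F.erase e) := by
    intro e he hPe
    have hmem : F.erase e ∈ E.powerset.filter P :=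
      mem_filter.2 ⟨mem_powerset.2 ((erase_subset e F).trans hFE), hPe⟩
    have := hFmin _ hmem
    rw [card_erase_of_mem he] at this
    have hpos : 0 < F.card := card_pos.2 ⟨e, he⟩
    omega
  intro i
  -- degree and neighbor set at i
  have hfil : F.filter (fun e => e.1 = i) = F.filter (fun e => e.1 ∈ ({i} : Finset U)) := by
    simp
  have hdegN : (F.filter fun e => e.1 = i).card = (Nb F {i}).card := by
    rw [hfil]
    refine (card_image_of_injOn ?_).symm
    rintro ⟨a, b⟩ h1 ⟨a', b'⟩ h2 h3
    simp only [mem_coe, mem_filter, mem_singleton] at h1 h2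
    simp only at h3
    simp [h1.2, h2.2, h3]
  have hlow : c + d i ≤ (F.filter fun e => e.1 = i).card := by
    rw [hdegN]
    have := hPF {i} (singleton_nonempty i)
    simpa using this
  rw [hdegN]
  by_contra hne
  have hgt : c + d i < (Nb F {i}).card := lt_of_le_of_ne (hdegN ▸ hlow) (Ne.symm hne)
  -- neighbors of i
  set nbrs : Finset V := Nb F {i} with hnbrs
  have hedge : ∀ j ∈ nbrs, (i, j) ∈ F := by
    intro j hj
    rw [hnbrs, mem_Nb] at hj
    obtain ⟨a, ha, hF⟩ := hj
    rw [mem_singleton] at ha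
    rwa [ha] at hF
  -- for each neighbor j, a tight set Ω_j containing i with (i,j) the unique edge into j from Ω_j
  have hwit : ∀ j ∈ nbrs, ∃ Ωj : Finset U, i ∈ Ωj ∧
      (Nb F Ωj).card = c + ∑ i ∈ Ωj, d i ∧
      (∀ a ∈ Ωj, (a, j) ∈ F → a = i) := by
    intro j hj
    have hbad := hmin (i, j) (hedge j hj)
    obtain ⟨Ωj, hbad2⟩ := not_forall.1 hbad
    rw [Classical.not_imp] at hbad2
    obtain ⟨hΩne, hΩlt'⟩ := hbad2
    have hΩlt := Nat.lt_of_not_le hΩlt'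
    -- `Nb F Ωj ⊆ Nb (F.erase (i,j)) Ωj ∪ {j}`
    have hsub : Nb F Ωj ⊆ Nb (F.erase (i, j)) Ωj ∪ {j} := by
      intro j' hj'
      rw [mem_Nb] at hj'
      obtain ⟨a, ha, hF⟩ := hj'
      by_cases hc : (a, j') = (i, j)
      · rw [mem_union, mem_singleton]; right; exact congrArg Prod.snd hc
      · exact mem_union_left _ (mem_Nb.2 ⟨a, ha, mem_erase.2 ⟨hc, hF⟩⟩)
    have hcard1 : (Nb F Ωj).card ≤ (Nb (F.erase (i, j)) Ωj).card + 1 := by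
      calc (Nb F Ωj).card ≤ (Nb (F.erase (i, j)) Ωj ∪ {j}).card := card_le_card hsub
        _ ≤ (Nb (F.erase (i, j)) Ωj).card + ({j} : Finset V).card := card_union_le _ _
        _ = (Nb (F.erase (i, j)) Ωj).card + 1 := by rw [card_singleton]
    have hPΩ := hPF Ωj hΩne
    have htight : (Nb F Ωj).card = c + ∑ i ∈ Ωj, d i := by omega
    have hjout : j ∉ Nb (F.erase (i, j)) Ωj := by
      intro hjin
      have : Nb F Ωj ⊆ Nb (F.erase (i, j)) Ωj := by
        intro j' hj'
        rcases mem_union.1 (hsub hj') with h | h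
        · exact h
        · rw [mem_singleton] at h; rwa [h]
      have := card_le_card this
      omega
    have hiΩ : i ∈ Ωj := by
      by_contra hiΩ
      have : Nb (F.erase (i, j)) Ωj = Nb F Ωj := by
        ext j'
        simp only [mem_Nb]
        constructor
        · rintro ⟨a, ha, hF⟩; exact ⟨a, ha, mem_of_mem_erase hF⟩
        · rintro ⟨a, ha, hF⟩
          refine ⟨a, ha, mem_erase.2 ⟨?_, hF⟩⟩
          intro heq
          rw [Prod.mk.injEq] at heq
          exact hiΩ (heq.1 ▸ ha)
      rw [this] at hΩlt
      omega
    refine ⟨Ωj, hiΩ, htight, ?_⟩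
    intro a ha hF
    by_contra hai
    exact hjout (mem_Nb.2 ⟨a, ha, mem_erase.2 ⟨by simp [hai], hF⟩⟩)
  choose Ωf hΩi hΩtight hΩuniq using hwit
  -- tight sets containing i are closed under intersection
  set Tight : Finset U → Prop := fun Ω => i ∈ Ω ∧ (Nb F Ω).card = c + ∑ i ∈ Ω, d i
    with hTdef
  have htclosed : ∀ A : Finset U, Tight A → ∀ B : Finset U, Tight B → Tight (A ⊓ B) := by
    rintro A ⟨hiA, htA⟩ B ⟨hiB, htB⟩
    have h1 := hPF (A ∪ B) ⟨i, mem_union_left _ hiA⟩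
    have h2 := hPF (A ∩ B) ⟨i, mem_inter.2 ⟨hiA, hiB⟩⟩
    have h3 := Nb_submod F A B
    have h4 : (∑ i ∈ A ∪ B, d i) + (∑ i ∈ A ∩ B, d i)
        = (∑ i ∈ A, d i) + (∑ i ∈ B, d i) := sum_union_inter
    refine ⟨mem_inter.2 ⟨hiA, hiB⟩, ?_⟩
    have : (A ⊓ B) = A ∩ B := rfl
    rw [this]
    omega
  have hnbne : nbrs.Nonempty := by
    rw [← card_pos]; omega
  -- intersection of all the tight witnesses
  set T : Finset U := nbrs.attach.inf' (attach_nonempty_iff.2 hnbne)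
      (fun j => Ωf j.1 j.2) with hT
  have hTtight : Tight T := by
    refine Finset.inf'_induction _ _ htclosed ?_
    rintro ⟨j, hj⟩ _
    exact ⟨hΩi j hj, hΩtight j hj⟩
  have hTsub : ∀ j (hj : j ∈ nbrs), T ⊆ Ωf j hj := by
    intro j hj
    rw [hT]
    exact Finset.le_iff_subset.mp
      (Finset.inf'_le (fun j : {x // x ∈ nbrs} => Ωf j.1 j.2) (b := ⟨j, hj⟩) (mem_attach _ _))
  obtain ⟨hiT, hTt⟩ := hTtight
  -- N(T) is the disjoint union of N(T \ {i}) and nbrs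
  have hsplit : Nb F T = Nb F (T.erase i) ∪ nbrs := by
    ext j
    simp only [mem_union, mem_Nb, hnbrs]
    constructor
    · rintro ⟨a, ha, hF⟩
      by_cases hai : a = i
      · right; exact ⟨i, mem_singleton_self i, hai ▸ hF⟩
      · left; exact ⟨a, mem_erase.2 ⟨hai, ha⟩, hF⟩
    · rintro (⟨a, ha, hF⟩ | ⟨a, ha, hF⟩)
      · exact ⟨a, mem_of_mem_erase ha, hF⟩
      · rw [mem_singleton] at ha
        exact ⟨i, hiT, ha ▸ hF⟩
  have hdisj : Disjoint (Nb F (T.erase i)) nbrs := by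
    rw [disjoint_right]
    intro j hj hjN
    rw [mem_Nb] at hjN
    obtain ⟨a, ha, hF⟩ := hjN
    rw [mem_erase] at ha
    exact ha.1 (hΩuniq j hj a (hTsub j hj ha.2) hF)
  have hcardsplit : (Nb F T).card = (Nb F (T.erase i)).card + nbrs.card := by
    rw [hsplit, card_union_of_disjoint hdisj]
  have hsumT : (∑ i ∈ T, d i) = d i + ∑ a ∈ T.erase i, d a :=
    (add_sum_erase T d hiT).symm
  -- conclude
  have hfinal : (Nb F (T.erase i)).card < ∑ a ∈ T.erase i, d a := by omega
  rcases (T.erase i).eq_empty_or_nonempty with he | hne2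
  · rw [he] at hfinal; simp at hfinal
  · have := hPF (T.erase i) hne2
    omega
end

section
/- Let q ≥ 2, k ≥ 2, n ≥ 1, s with q^s > q^{n-1} + (k-1)(q-1)q^{k-2}. Let F(α_1,...,α_n) = F_1 · F_2 be a polynomial in n variables over F_{q^s}, where F_2 is the n×n Moore determinant det(α_j^{q^{i-1}})_{i,j} and F_1 is any polynomial with deg_{α_j} F_1 ≤ (k-1)(q-1)q^{k-2} for each j. If F is not the zero polynomial, then there exist α_1,...,α_n ∈ F_{q^s} with F(α_1,...,α_n) ≠ 0; in particular such α_1,...,α_n are linearly independent over F_q. -/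
/-!
Each variable occurs in the Moore determinant with degree at most `q ^ (n - 1)`, so in
`F₁ * det` with degree below `q ^ s = |K|`; hence `F₁ * det` has a nonvanishing point over `K`
(combinatorial Nullstellensatz on the full grid `Kⁿ`). At that point the Moore determinant
is nonzero, and a nonzero Moore determinant forces `Fq`-linear independence because
`x ↦ x ^ q` is `Fq`-linear.
-/

open MvPolynomial Matrix

def mooreMatrix {R : Type*} [CommRing R] {n : ℕ} (q : ℕ) (v : Fin n → R) :
    Matrix (Fin n) (Fin n) R :=
  Matrix.of fun i j => v j ^ q ^ (i : ℕ)

lemma mooreMatrix_map {R S : Type*} [CommRing R] [CommRing S] {n : ℕ} (f : R →+* S) (q : ℕ)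
    (v : Fin n → R) : (mooreMatrix q v).map f = mooreMatrix q (f ∘ v) := by
  ext i j
  simp [mooreMatrix]

lemma degreeOf_det_mooreMatrix_X_le (R : Type*) [CommRing R] [Nontrivial R] {n q : ℕ}
    (hq : 1 ≤ q) (j : Fin n) :
    degreeOf j (mooreMatrix q (X : Fin n → MvPolynomial (Fin n) R)).det ≤ q ^ (n - 1) := by
  classical
  rw [det_apply']
  refine (degreeOf_sum_le _ _ _).trans (Finset.sup_le fun σ _ => ?_)
  rw [← map_intCast (C : R →+* MvPolynomial (Fin n) R)]
  refine (degreeOf_C_mul_le _ _ _).trans ((degreeOf_prod_le _ _ _).trans ?_)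
  calc ∑ i, degreeOf j (mooreMatrix q X (σ i) i)
      ≤ ∑ i, if i = j then q ^ (σ i : ℕ) else 0 := by
        refine Finset.sum_le_sum fun i _ => (degreeOf_pow_le _ _ _).trans ?_
        rcases eq_or_ne i j with rfl | hij
        · simp
        · simp [degreeOf_X, hij.symm]
    _ = q ^ (σ j : ℕ) := by simp
    _ ≤ q ^ (n - 1) := Nat.pow_le_pow_right hq (Nat.le_sub_one_of_lt (σ j).isLt)

/-- Row `i` of the Moore matrix is the first row under the `Fq`-linear map `x ↦ x ^ q ^ i`, so
an `Fq`-linear relation among the `v j` gives a kernel vector. -/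
lemma linearIndependent_of_det_mooreMatrix_ne_zero {Fq K : Type*} [Field Fq] [Fintype Fq]
    [CommRing K] [IsDomain K] [Algebra Fq K] {n : ℕ} {v : Fin n → K}
    (hv : (mooreMatrix (Fintype.card Fq) v).det ≠ 0) : LinearIndependent Fq v := by
  classical
  rw [Fintype.linearIndependent_iff]
  intro g hg
  by_contra! hne
  refine hv (exists_mulVec_eq_zero_iff.mp ⟨algebraMap Fq K ∘ g, ?_, ?_⟩)
  · obtain ⟨j, hj⟩ := hne
    exact fun h => hj ((algebraMap Fq K).injective (by simpa using congrFun h j))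
  · ext i
    have hfrob := congrArg (FiniteField.frobeniusAlgHom Fq K ^ (i : ℕ)) hg
    simp only [map_sum, map_smul, map_zero, AlgHom.coe_pow, FiniteField.coe_frobeniusAlgHom,
      pow_iterate] at hfrob
    simpa [mooreMatrix, mulVec, dotProduct, Algebra.smul_def, mul_comm] using hfrob

lemma exists_eval_ne_zero_of_degreeOf_lt_card {R σ : Type*} [CommRing R] [IsDomain R]
    [Fintype R] [Finite σ] {P : MvPolynomial σ R} (hP : P ≠ 0)
    (hdeg : ∀ i, degreeOf i P < Fintype.card R) : ∃ x, eval x P ≠ 0 := by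
  by_contra! h
  exact hP (eq_zero_of_eval_zero_at_prod_finset P (fun _ => Finset.univ) hdeg fun x _ => h x)

theorem exists_eval_ne_zero_moore_general
    (Fq K : Type*) [Field Fq] [Fintype Fq] [Field K] [Fintype K] [Algebra Fq K]
    (q s n k : ℕ) (hq : 2 ≤ q)
    (hcardFq : Fintype.card Fq = q) (hcardK : Fintype.card K = q ^ s)
    (hbound : q ^ (n - 1) + (k - 1) * (q - 1) * q ^ (k - 2) < q ^ s)
    (F₁ : MvPolynomial (Fin n) K)
    (hdeg : ∀ j, MvPolynomial.degreeOf j F₁ ≤ (k - 1) * (q - 1) * q ^ (k - 2))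
    (hF : F₁ * Matrix.det
        (Matrix.of fun i j : Fin n =>
          (MvPolynomial.X j : MvPolynomial (Fin n) K) ^ q ^ (i : ℕ)) ≠ 0) :
    ∃ α : Fin n → K,
      MvPolynomial.eval α
        (F₁ * Matrix.det
          (Matrix.of fun i j : Fin n =>
            (MvPolynomial.X j : MvPolynomial (Fin n) K) ^ q ^ (i : ℕ))) ≠ 0 ∧
      LinearIndependent Fq α := by
  change F₁ * (mooreMatrix q X).det ≠ 0 at hF
  change ∃ α, eval α (F₁ * (mooreMatrix q X).det) ≠ 0 ∧ _
  have hdegF (j : Fin n) : degreeOf j (F₁ * (mooreMatrix q X).det) < Fintype.card K := by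
    have := degreeOf_det_mooreMatrix_X_le K (by omega : 1 ≤ q) j
    have := degreeOf_mul_le j F₁ (mooreMatrix q X).det
    have := hdeg j
    omega
  obtain ⟨α, hα⟩ := exists_eval_ne_zero_of_degreeOf_lt_card hF hdegF
  refine ⟨α, hα, linearIndependent_of_det_mooreMatrix_ne_zero ?_⟩
  have heval_X : eval α ∘ X = α := funext fun j => eval_X j
  rw [map_mul, RingHom.map_det, RingHom.mapMatrix_apply, mooreMatrix_map, heval_X] at hα
  exact hcardFq ▸ right_ne_zero_of_mul hα

/-- Schwartz–Zippel applied to `F = F₁ · F₂`, where `F₂` is the `n × n` Moore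
determinant `det (α_j^{q^{i-1}})` and `deg_{α_j} F₁ ≤ (k-1)(q-1)q^{k-2}`:
if `q^s > q^{n-1} + (k-1)(q-1)q^{k-2}` and `F ≠ 0`, then there are
`α_1, …, α_n ∈ F_{q^s}` with `F(α_1,…,α_n) ≠ 0`; in particular these `α_j`
are linearly independent over `F_q`. -/
theorem exists_eval_ne_zero_moore
    (Fq K : Type*) [Field Fq] [Fintype Fq] [Field K] [Fintype K] [Algebra Fq K]
    (q s n k : ℕ) (hq : 2 ≤ q) (hk : 2 ≤ k) (hn : 1 ≤ n)
    (hcardFq : Fintype.card Fq = q) (hcardK : Fintype.card K = q ^ s)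
    (hbound : q ^ (n - 1) + (k - 1) * (q - 1) * q ^ (k - 2) < q ^ s)
    (F₁ : MvPolynomial (Fin n) K)
    (hdeg : ∀ j, MvPolynomial.degreeOf j F₁ ≤ (k - 1) * (q - 1) * q ^ (k - 2))
    (hF : F₁ * Matrix.det
        (Matrix.of fun i j : Fin n =>
          (MvPolynomial.X j : MvPolynomial (Fin n) K) ^ q ^ (i : ℕ)) ≠ 0) :
    ∃ α : Fin n → K,
      MvPolynomial.eval α
        (F₁ * Matrix.det
          (Matrix.of fun i j : Fin n =>
            (MvPolynomial.X j : MvPolynomial (Fin n) K) ^ q ^ (i : ℕ))) ≠ 0 ∧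
      LinearIndependent Fq α :=
  exists_eval_ne_zero_moore_general Fq K q s n k hq hcardFq hcardK hbound F₁ hdeg hF
end
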